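/- arXiv:2106.00361 — 5 statements merged into one kernel-verified Lean document; each statement's English description precedes it below -/
import Mathlib

section
/- Let X and Y be Banach spaces, C ⊆ Y a closed convex pointed cone with nonempty interior, f : X → Y, x̄ an efficient solution of (X, f), and k⁰ ∈ int C. Then for each n ≥ 1 the perturbed problem (X, fₙ) with fₙ(x) = f(x) + (1/n)‖x − x̄‖·k⁰ is Dentcheva–Helbig well-posed at x̄, i.e., inf_{α>0} diam{x : fₙ(x) ∈ fₙ(x̄) + αc − C} = 0 for every c ∈ C. -/
/-!
Put `t = ‖x - xbar‖ / n` for a point `x` of the level set at height `fₙ xbar + d`, and let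
`ball k0 ε ⊆ C`. If `t * ε > ‖d‖`, then `t • k0 - d` is an interior point of `C`; adding it to
the level-set condition gives `f xbar - f x ∈ C`, so efficiency forces `f x = f xbar`, and then
`t • k0 - d ∈ C ∩ -C = {0}` puts `0` in the interior of a pointed cone, which is impossible
unless `Y = 0`. Hence `‖x - xbar‖ ≤ n * ‖d‖ / ε`, and with `d = α • c` the level sets have
diameter `O(α)` as `α → 0⁺`.
-/

open Set Filter Topology Metric

section ConvexCone

variable {E : Type*} [AddCommGroup E] [Module ℝ E] {C : Set E}

theorem add_mem_of_convex_of_smul_mem (hconv : Convex ℝ C)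
    (hcone : ∀ t : ℝ, 0 ≤ t → ∀ y ∈ C, t • y ∈ C) {a b : E} (ha : a ∈ C) (hb : b ∈ C) :
    a + b ∈ C := by
  have hmid := hconv ha hb (by norm_num : (0 : ℝ) ≤ 1 / 2) (by norm_num : (0 : ℝ) ≤ 1 / 2)
    (by norm_num)
  convert hcone 2 zero_le_two _ hmid using 1
  module

open scoped Pointwise in
theorem smul_mem_interior_of_smul_mem [TopologicalSpace E] [ContinuousConstSMul ℝ E]
    (hcone : ∀ t : ℝ, 0 ≤ t → ∀ y ∈ C, t • y ∈ C) {t : ℝ} (ht : 0 < t) {y : E}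
    (hy : y ∈ interior C) : t • y ∈ interior C := by
  have hsub : t • interior C ⊆ interior C := by
    rw [← interior_smul₀ ht.ne']
    exact interior_mono (smul_set_subset_iff.2 fun z hz => hcone t ht.le z hz)
  exact hsub (smul_mem_smul_set hy)

theorem zero_notMem_interior_of_inter_neg_eq_zero [TopologicalSpace E]
    [IsTopologicalAddGroup E] [ContinuousSMul ℝ E] [Nontrivial E] (hC : C ∩ -C = {0}) :
    (0 : E) ∉ interior C := by
  intro h0
  have hC0 : C ∈ 𝓝 (0 : E) := mem_interior_iff_mem_nhds.1 h0
  have h : ({0} : Set E) ∈ 𝓝 (0 : E) := hC ▸ inter_mem hC0 (neg_mem_nhds_zero E hC0)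
  exact not_isOpen_singleton (0 : E) (isOpen_iff_mem_nhds.2 fun x hx => by rwa [hx])

end ConvexCone

theorem sInf_image_Ioi_eq_zero_of_le_mul {g : ℝ → ℝ} (K : ℝ) (hg₀ : ∀ α > 0, 0 ≤ g α)
    (hgK : ∀ α > 0, g α ≤ K * α) : sInf (g '' Ioi 0) = 0 := by
  have hnonneg : ∀ y ∈ g '' Ioi 0, 0 ≤ y := forall_mem_image.2 hg₀
  refine le_antisymm ?_ (Real.sInf_nonneg hnonneg)
  have hK : Tendsto (fun α => K * α) (𝓝[>] 0) (𝓝 0) := by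
    simpa using ((continuous_const_mul K).tendsto 0).mono_left nhdsWithin_le_nhds
  refine ge_of_tendsto hK ?_
  filter_upwards [self_mem_nhdsWithin] with α hα
  exact (csInf_le ⟨0, hnonneg⟩ (mem_image_of_mem g hα)).trans (hgK α hα)

section Perturbation

variable {X Y : Type*} [NormedAddCommGroup Y] [NormedSpace ℝ Y] {C : Set Y}

theorem mul_le_norm_of_sub_mem [Nontrivial Y] (hconv : Convex ℝ C)
    (hcone : ∀ t : ℝ, 0 ≤ t → ∀ y ∈ C, t • y ∈ C) (hpointed : C ∩ -C = {0})
    {f : X → Y} {xbar : X} (heff : {y | ∃ x, y = f x - f xbar} ∩ (-C) = {0})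
    {k0 : Y} {ε : ℝ} (hε : 0 < ε) (hball : ball k0 ε ⊆ C) {x : X} {d : Y} {t : ℝ}
    (hx : f xbar + d - (f x + t • k0) ∈ C) : t * ε ≤ ‖d‖ := by
  by_contra! hlt
  have ht : 0 < t := by
    by_contra! ht
    nlinarith [norm_nonneg d]
  have hu : t • k0 - d ∈ interior C := by
    have hmem : k0 - t⁻¹ • d ∈ interior C := by
      refine (isOpen_ball.subset_interior_iff.2 hball) ?_
      rw [mem_ball, dist_eq_norm, sub_sub_cancel_left, norm_neg, norm_smul,
        Real.norm_of_nonneg (inv_nonneg.2 ht.le), inv_mul_lt_iff₀ ht]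
      linarith
    convert smul_mem_interior_of_smul_mem hcone ht hmem using 1
    rw [smul_sub, smul_inv_smul₀ ht.ne']
  have hfx : f x = f xbar := by
    have hsum := add_mem_of_convex_of_smul_mem hconv hcone hx (interior_subset hu)
    have hmem : f x - f xbar ∈ {y | ∃ x, y = f x - f xbar} ∩ (-C) :=
      ⟨⟨x, rfl⟩, by rw [Set.mem_neg, neg_sub]; convert hsum using 1; abel⟩
    rw [heff] at hmem
    exact sub_eq_zero.1 hmem
  have hzero : t • k0 - d ∈ C ∩ -C :=
    ⟨interior_subset hu, by rw [Set.mem_neg, neg_sub]; convert hx using 1; rw [hfx]; abel⟩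
  rw [hpointed, mem_singleton_iff] at hzero
  exact zero_notMem_interior_of_inter_neg_eq_zero hpointed (hzero ▸ hu)

theorem perturbed_levelSet_subset_closedBall [SeminormedAddCommGroup X] [Nontrivial Y]
    (hconv : Convex ℝ C) (hcone : ∀ t : ℝ, 0 ≤ t → ∀ y ∈ C, t • y ∈ C) (hpointed : C ∩ -C = {0})
    {f : X → Y} {xbar : X}
    (heff : {y | ∃ x, y = f x - f xbar} ∩ (-C) = {0})
    {k0 : Y} {ε : ℝ} (hε : 0 < ε) (hball : ball k0 ε ⊆ C) {r : ℝ} (hr : 0 < r) (d : Y) :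
    {x | (f xbar + (r * ‖xbar - xbar‖) • k0) + d - (f x + (r * ‖x - xbar‖) • k0) ∈ C}
      ⊆ closedBall xbar (‖d‖ / (r * ε)) := by
  intro x hx
  rw [sub_self, norm_zero, mul_zero, zero_smul, add_zero] at hx
  have hle := mul_le_norm_of_sub_mem hconv hcone hpointed heff hε hball hx
  rw [mem_closedBall, dist_eq_norm, le_div_iff₀ (by positivity)]
  linarith

theorem diam_perturbed_levelSet_le [NormedAddCommGroup X] [NormedSpace ℝ X]
    (hconv : Convex ℝ C) (hcone : ∀ t : ℝ, 0 ≤ t → ∀ y ∈ C, t • y ∈ C) (hpointed : C ∩ -C = {0})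
    {f : X → Y} {xbar : X} (heff : {y | ∃ x, y = f x - f xbar} ∩ (-C) = {0})
    {k0 : Y} {ε : ℝ} (hε : 0 < ε) (hball : ball k0 ε ⊆ C) {r : ℝ} (hr : 0 < r) (d : Y) :
    diam {x | (f xbar + (r * ‖xbar - xbar‖) • k0) + d - (f x + (r * ‖x - xbar‖) • k0) ∈ C}
      ≤ 2 * (‖d‖ / (r * ε)) := by
  rcases subsingleton_or_nontrivial Y with hY | hY
  · -- Here `C = Y`, so the level set is `univ`: its diameter is `0` only by the junk
    -- convention `diam = 0` for unbounded sets (or because `X` is a point).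
    have hC : ∀ y : Y, y ∈ C := fun y => Subsingleton.elim k0 y ▸ hball (mem_ball_self hε)
    simp only [hC, ofPred_true]
    by_cases hX : Nontrivial X
    · rw [diam_eq_zero_of_unbounded (NormedSpace.unbounded_univ ℝ X)]
      positivity
    · rw [not_nontrivial_iff_subsingleton] at hX
      rw [diam_subsingleton subsingleton_univ]
      positivity
  · exact (diam_mono (perturbed_levelSet_subset_closedBall hconv hcone hpointed heff hε hball hr d)
      isBounded_closedBall).trans (diam_closedBall (by positivity))

end Perturbation

theorem perturbed_DH_wellposed_general
    {X Y : Type*} [NormedAddCommGroup X] [NormedSpace ℝ X]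
    [NormedAddCommGroup Y] [NormedSpace ℝ Y]
    (C : Set Y) (hCconv : Convex ℝ C)
    (hCcone : ∀ t : ℝ, 0 ≤ t → ∀ y ∈ C, t • y ∈ C)
    (hCpointed : C ∩ (-C) = {0})
    (f : X → Y) (xbar : X)
    (heff : {y | ∃ x, y = f x - f xbar} ∩ (-C) = {0})
    (k0 : Y) (hk0 : k0 ∈ interior C) (n : ℕ) (hn : 1 ≤ n) :
    ∀ c ∈ C, sInf ((fun α : ℝ => Metric.diam
      {x : X | (f xbar + ((1 / (n : ℝ)) * ‖xbar - xbar‖) • k0) + α • c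
          - (f x + ((1 / (n : ℝ)) * ‖x - xbar‖) • k0) ∈ C}) '' Set.Ioi (0 : ℝ)) = 0 := by
  intro c _
  obtain ⟨ε, hε, hball⟩ := Metric.mem_nhds_iff.1 (mem_interior_iff_mem_nhds.1 hk0)
  have hr : 0 < 1 / (n : ℝ) := one_div_pos.2 (by exact_mod_cast hn)
  refine sInf_image_Ioi_eq_zero_of_le_mul (2 * (‖c‖ / (1 / n * ε))) (fun _ _ => diam_nonneg)
    fun α hα => ?_
  calc _ ≤ 2 * (‖α • c‖ / (1 / n * ε)) :=
        diam_perturbed_levelSet_le hCconv hCcone hCpointed heff hε hball hr _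
    _ = _ := by rw [norm_smul, Real.norm_of_nonneg hα.le]; ring

/-- If `xbar` is efficient for `(X, f)` and `k0 ∈ int C`, then for every `n ≥ 1`
the perturbed problem `(X, fₙ)` with `fₙ x = f x + (1/n)‖x - xbar‖ • k0` is
Dentcheva–Helbig well-posed at `xbar`. -/
theorem perturbed_DH_wellposed
    {X Y : Type*} [NormedAddCommGroup X] [NormedSpace ℝ X] [CompleteSpace X]
    [NormedAddCommGroup Y] [NormedSpace ℝ Y] [CompleteSpace Y]
    (C : Set Y) (hCclosed : IsClosed C) (hCconv : Convex ℝ C)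
    (hCcone : ∀ t : ℝ, 0 ≤ t → ∀ y ∈ C, t • y ∈ C)
    (hCpointed : C ∩ (-C) = {0}) (hCint : (interior C).Nonempty)
    (f : X → Y) (xbar : X)
    (heff : {y | ∃ x, y = f x - f xbar} ∩ (-C) = {0})
    (k0 : Y) (hk0 : k0 ∈ interior C) (n : ℕ) (hn : 1 ≤ n) :
    ∀ c ∈ C, sInf ((fun α : ℝ => Metric.diam
      {x : X | (f xbar + ((1 / (n : ℝ)) * ‖xbar - xbar‖) • k0) + α • c
          - (f x + ((1 / (n : ℝ)) * ‖x - xbar‖) • k0) ∈ C}) '' Set.Ioi (0 : ℝ)) = 0 :=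
  perturbed_DH_wellposed_general C hCconv hCcone hCpointed f xbar heff k0 hk0 n hn
end

section
/- Let X, Y be Banach spaces, C ⊆ Y a closed convex pointed cone with nonempty interior, f : X → Y, x̄ ∈ Eff(X, f), and ξ̄ ∈ C* \ {0}. If the scalar problem of minimizing h(x) = ⟨ξ̄, f(x)⟩ over X is Tykhonov well-posed with minimizer x̄, then the vector problem (X, f) is DH-well-posed at x̄. -/
/-!
If `f xbar + α • c - f x ∈ C`, then `ξ (f x) ≤ ξ (f xbar) + α * ξ c` because `ξ` is nonnegative
on `C`. Hence any sequence chosen from the sublevel sets with `α = 1 / (k + 1)` is a minimizing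
sequence of `ξ ∘ f`, and converges to `xbar` by Tykhonov well-posedness. So these sets eventually
lie in arbitrarily small balls around `xbar`, and the infimum of their diameters is `0`.
-/

open Filter Metric Set Topology

theorem exists_subset_closedBall_of_forall_tendsto {X : Type*} [PseudoMetricSpace X]
    {s : ℕ → Set X} {x : X} (h : ∀ u : ℕ → X, (∀ k, u k ∈ s k) → Tendsto u atTop (𝓝 x))
    {ε : ℝ} (hε : 0 < ε) : ∃ k, s k ⊆ closedBall x ε := by
  by_contra! hfar
  choose u hu hud using fun k => not_subset.mp (hfar k)
  obtain ⟨k, hk⟩ := (Metric.tendsto_atTop.mp (h u hu)) ε hε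
  exact hud k (mem_closedBall.mpr (hk k le_rfl).le)

theorem sInf_image_diam_eq_zero_of_forall_exists_subset_closedBall {X : Type*}
    [PseudoMetricSpace X] {S : ℝ → Set X} {x : X}
    (h : ∀ ε > 0, ∃ α > 0, S α ⊆ closedBall x ε) :
    sInf ((fun α => diam (S α)) '' Ioi 0) = 0 := by
  refine le_antisymm (le_of_forall_pos_le_add fun ε hε => ?_)
    (Real.sInf_nonneg <| by rintro _ ⟨α, -, rfl⟩; exact diam_nonneg)
  obtain ⟨α, hα, hsub⟩ := h (ε / 2) (half_pos hε)
  calc sInf ((fun α => diam (S α)) '' Ioi 0) ≤ diam (S α) :=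
        csInf_le ⟨0, by rintro _ ⟨β, -, rfl⟩; exact diam_nonneg⟩ ⟨α, hα, rfl⟩
    _ ≤ 2 * (ε / 2) := diam_le_of_subset_closedBall (half_pos hε).le hsub
    _ = 0 + ε := by ring

theorem sInf_image_diam_eq_zero_of_forall_tendsto {X : Type*} [PseudoMetricSpace X]
    {S : ℝ → Set X} {x : X}
    (h : ∀ u : ℕ → X, (∀ k : ℕ, u k ∈ S (1 / (k + 1))) → Tendsto u atTop (𝓝 x)) :
    sInf ((fun α => diam (S α)) '' Ioi 0) = 0 := by
  refine sInf_image_diam_eq_zero_of_forall_exists_subset_closedBall (x := x) fun ε hε => ?_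
  obtain ⟨k, hk⟩ := exists_subset_closedBall_of_forall_tendsto h hε
  exact ⟨_, Nat.one_div_pos_of_nat, hk⟩

theorem apply_le_add_mul_of_add_smul_sub_mem {Y : Type*} [AddCommGroup Y] [Module ℝ Y]
    {C : Set Y} {ξ : Y →ₗ[ℝ] ℝ} (hξC : ∀ c ∈ C, 0 ≤ ξ c) {y z c : Y} {α : ℝ}
    (h : y + α • c - z ∈ C) : ξ z ≤ ξ y + α * ξ c := by
  have := hξC _ h
  rw [map_sub, map_add, map_smul, smul_eq_mul] at this
  linarith

theorem tendsto_of_le_of_le_add_one_div {g : ℕ → ℝ} {a b : ℝ} (hlow : ∀ k, a ≤ g k)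
    (hup : ∀ k : ℕ, g k ≤ a + 1 / (k + 1) * b) : Tendsto g atTop (𝓝 a) := by
  have : Tendsto (fun k : ℕ => a + 1 / (k + 1) * b) atTop (𝓝 (a + 0 * b)) :=
    (tendsto_one_div_add_atTop_nhds_zero_nat.mul_const b).const_add a
  rw [zero_mul, add_zero] at this
  exact tendsto_of_tendsto_of_tendsto_of_le_of_le tendsto_const_nhds this hlow hup

theorem DH_wellposed_of_scalar_Tykhonov_general
    {X Y : Type*} [NormedAddCommGroup X]
    [NormedAddCommGroup Y] [NormedSpace ℝ Y]
    (C : Set Y)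
    (f : X → Y) (xbar : X)
    (ξ : Y →L[ℝ] ℝ) (hξC : ∀ c ∈ C, 0 ≤ ξ c)
    -- Tykhonov well-posedness of the scalar problem, with (unique) minimizer `xbar`:
    (hmin : ∀ x : X, x ≠ xbar → ξ (f xbar) < ξ (f x))
    (hTyk : ∀ u : ℕ → X,
      Filter.Tendsto (fun k => ξ (f (u k))) Filter.atTop (nhds (ξ (f xbar))) →
      Filter.Tendsto u Filter.atTop (nhds xbar)) :
    ∀ c ∈ C, sInf ((fun α : ℝ => Metric.diam
      {x : X | f xbar + α • c - f x ∈ C}) '' Set.Ioi (0 : ℝ)) = 0 := by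
  intro c _
  refine sInf_image_diam_eq_zero_of_forall_tendsto fun u hu => hTyk u ?_
  refine tendsto_of_le_of_le_add_one_div (b := ξ c) (fun k => ?_) fun k =>
    apply_le_add_mul_of_add_smul_sub_mem (ξ := ξ.toLinearMap) hξC (hu k)
  rcases eq_or_ne (u k) xbar with h | h
  · rw [h]
  · exact (hmin _ h).le

/-- If `xbar ∈ Eff(X,f)`, `ξ ∈ C* \ {0}` and the scalar problem of minimizing
`x ↦ ξ (f x)` is Tykhonov well-posed with minimizer `xbar`, then `(X, f)` is DH-well-posed
at `xbar`. -/
theorem DH_wellposed_of_scalar_Tykhonov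
    {X Y : Type*} [NormedAddCommGroup X] [NormedSpace ℝ X] [CompleteSpace X]
    [NormedAddCommGroup Y] [NormedSpace ℝ Y] [CompleteSpace Y]
    (C : Set Y) (hCclosed : IsClosed C) (hCconv : Convex ℝ C)
    (hCcone : ∀ t : ℝ, 0 ≤ t → ∀ y ∈ C, t • y ∈ C)
    (hCpointed : C ∩ (-C) = {0}) (hCint : (interior C).Nonempty)
    (f : X → Y) (xbar : X)
    (heff : {y | ∃ x, y = f x - f xbar} ∩ (-C) = {0})
    (ξ : Y →L[ℝ] ℝ) (hξC : ∀ c ∈ C, 0 ≤ ξ c) (hξ0 : ξ ≠ 0)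
    -- Tykhonov well-posedness of the scalar problem, with (unique) minimizer `xbar`:
    (hmin : ∀ x : X, x ≠ xbar → ξ (f xbar) < ξ (f x))
    (hTyk : ∀ u : ℕ → X,
      Filter.Tendsto (fun k => ξ (f (u k))) Filter.atTop (nhds (ξ (f xbar))) →
      Filter.Tendsto u Filter.atTop (nhds xbar)) :
    ∀ c ∈ C, sInf ((fun α : ℝ => Metric.diam
      {x : X | f xbar + α • c - f x ∈ C}) '' Set.Ioi (0 : ℝ)) = 0 :=
  DH_wellposed_of_scalar_Tykhonov_general C f xbar ξ hξC hmin hTyk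
end

section
/- Let Y be a normed space and A ⊆ Y nonempty, convex, with A ≠ Y. Then the oriented distance function D_A(y) = d_A(y) − d_{Y∖A}(y) is a convex function on Y. -/
/-!
Whenever `closedBall z ρ ⊆ A` with `0 ≤ ρ`, we have `D_A y ≤ dist y z - ρ`, and these bounds are
sharp: a point outside `A` is approached by radius-zero balls at nearby points of `A`, a point of
`A` by balls centred at it of radius almost `d_{Aᶜ}`. So `D_A` is the infimum over the balls
inside `A` of `dist y z - ρ`, a jointly convex function of `(y, z, ρ)`. For convex `A` the balls
inside `A` form a convex family, since `closedBall (l • z₁ + m • z₂) (l * ρ₁ + m * ρ₂)` lies in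
`l • closedBall z₁ ρ₁ + m • closedBall z₂ ρ₂`, and an infimal projection of a convex function over
a convex set is convex.
-/

open Metric Set Pointwise

noncomputable def orientedDist {X : Type*} [PseudoMetricSpace X] (A : Set X) (y : X) : ℝ :=
  infDist y A - infDist y Aᶜ

theorem sub_dist_le_infDist_compl_of_closedBall_subset {X : Type*} [PseudoMetricSpace X]
    {A : Set X} {z : X} {ρ : ℝ} (hc : Aᶜ.Nonempty)
    (hA : closedBall z ρ ⊆ A) (y : X) : ρ - dist y z ≤ infDist y Aᶜ := by
  have hz : ρ ≤ infDist z Aᶜ := (le_infDist hc).2 fun w hw =>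
    (not_le.1 fun h => hw (hA (mem_closedBall'.2 h))).le
  linarith [infDist_le_infDist_add_dist (x := z) (y := y) (s := Aᶜ), dist_comm y z]

theorem exists_closedBall_subset_dist_sub_le_orientedDist_add {X : Type*} [MetricSpace X]
    {A : Set X} (hne : A.Nonempty) (y : X) {ε : ℝ} (hε : 0 < ε) :
    ∃ z ρ, 0 ≤ ρ ∧ closedBall z ρ ⊆ A ∧ dist y z - ρ ≤ orientedDist A y + ε := by
  by_cases hy : y ∈ A
  · refine ⟨y, max (infDist y Aᶜ - ε) 0, le_max_right _ _, ?_, ?_⟩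
    · rcases max_cases (infDist y Aᶜ - ε) 0 with ⟨hmax, -⟩ | ⟨hmax, -⟩ <;> rw [hmax]
      · exact (closedBall_subset_ball (by linarith)).trans ball_infDist_compl_subset
      · simpa using hy
    · rw [orientedDist, infDist_zero_of_mem hy, dist_self]
      linarith [le_max_left (infDist y Aᶜ - ε) 0]
  · obtain ⟨z, hz, hyz⟩ := (infDist_lt_iff hne).1 (lt_add_of_pos_right (infDist y A) hε)
    refine ⟨z, 0, le_rfl, by simpa using hz, ?_⟩
    rw [orientedDist, infDist_zero_of_mem (show y ∈ Aᶜ from hy)]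
    linarith

section NormedSpace

variable {Y : Type*} [NormedAddCommGroup Y] [NormedSpace ℝ Y] {A : Set Y} {y z : Y} {ρ : ℝ}

theorem infDist_le_dist_sub_of_closedBall_subset (hρ : 0 ≤ ρ) (hA : closedBall z ρ ⊆ A)
    (hy : ρ ≤ dist y z) : infDist y A ≤ dist y z - ρ := by
  obtain ⟨p, hyp, hpz⟩ := exists_dist_le_le (sub_nonneg.2 hy) hρ (by simp : dist y z ≤ ρ + _)
  exact (infDist_le_dist_of_mem (hA (mem_closedBall.2 hpz))).trans hyp

theorem orientedDist_le_dist_sub_of_closedBall_subset (hc : Aᶜ.Nonempty) (hρ : 0 ≤ ρ)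
    (hA : closedBall z ρ ⊆ A) (y : Y) : orientedDist A y ≤ dist y z - ρ := by
  have hcompl := sub_dist_le_infDist_compl_of_closedBall_subset hc hA y
  rcases le_total ρ (dist y z) with hy | hy
  · have := infDist_le_dist_sub_of_closedBall_subset hρ hA hy
    unfold orientedDist
    linarith [infDist_nonneg (x := y) (s := Aᶜ)]
  · rw [orientedDist, infDist_zero_of_mem (hA (mem_closedBall.2 hy))]
    linarith

theorem closedBall_add_subset_add_closedBall {ε δ : ℝ} (hε : 0 ≤ ε) (hδ : 0 ≤ δ) (a b : Y) :
    closedBall (a + b) (ε + δ) ⊆ closedBall a ε + closedBall b δ := by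
  intro w hw
  obtain ⟨p, hwp, hpab⟩ := exists_dist_le_le hδ hε hw
  refine ⟨p - b, ?_, w - (p - b), ?_, add_sub_cancel _ _⟩
  · rwa [mem_closedBall, dist_eq_norm, sub_sub, add_comm b, ← dist_eq_norm]
  · rwa [mem_closedBall, dist_eq_norm, sub_sub_eq_add_sub, add_sub_right_comm,
      add_sub_cancel_right, ← dist_eq_norm]

theorem Convex.closedBall_combo_subset (hA : Convex ℝ A) {z₁ z₂ : Y} {ρ₁ ρ₂ l m : ℝ}
    (hρ₁ : 0 ≤ ρ₁) (hρ₂ : 0 ≤ ρ₂) (h₁ : closedBall z₁ ρ₁ ⊆ A) (h₂ : closedBall z₂ ρ₂ ⊆ A)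
    (hl : 0 ≤ l) (hm : 0 ≤ m) (hlm : l + m = 1) :
    closedBall (l • z₁ + m • z₂) (l * ρ₁ + m * ρ₂) ⊆ A :=
  calc closedBall (l • z₁ + m • z₂) (l * ρ₁ + m * ρ₂)
      ⊆ closedBall (l • z₁) (l * ρ₁) + closedBall (m • z₂) (m * ρ₂) :=
        closedBall_add_subset_add_closedBall (mul_nonneg hl hρ₁) (mul_nonneg hm hρ₂) _ _
    _ = l • closedBall z₁ ρ₁ + m • closedBall z₂ ρ₂ := by
        rw [smul_closedBall l z₁ hρ₁, smul_closedBall m z₂ hρ₂, Real.norm_of_nonneg hl,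
          Real.norm_of_nonneg hm]
    _ ⊆ l • A + m • A := add_subset_add (smul_set_mono h₁) (smul_set_mono h₂)
    _ ⊆ A := hA.set_combo_subset hl hm hlm

theorem dist_combo_le (a b z₁ z₂ : Y) {l m : ℝ} (hl : 0 ≤ l) (hm : 0 ≤ m) :
    dist (l • a + m • b) (l • z₁ + m • z₂) ≤ l * dist a z₁ + m * dist b z₂ :=
  (dist_add_add_le _ _ _ _).trans_eq <| by
    rw [dist_smul₀, dist_smul₀, Real.norm_of_nonneg hl, Real.norm_of_nonneg hm]

end NormedSpace

/-- For nonempty convex `A ≠ Y`, the oriented distance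
`D_A(y) = d_A(y) - d_{Y∖A}(y)` is convex. -/
theorem orientedDist_convex
    {Y : Type*} [NormedAddCommGroup Y] [NormedSpace ℝ Y]
    (A : Set Y) (hne : A.Nonempty) (hAconv : Convex ℝ A) (hAne : A ≠ Set.univ) :
    ConvexOn ℝ Set.univ (fun y : Y => Metric.infDist y A - Metric.infDist y Aᶜ) := by
  have hc : Aᶜ.Nonempty := nonempty_compl.2 hAne
  refine ⟨convex_univ, fun a _ b _ l m hl hm hlm => le_of_forall_pos_le_add fun ε hε => ?_⟩
  obtain ⟨z₁, ρ₁, hρ₁, h₁, ha⟩ := exists_closedBall_subset_dist_sub_le_orientedDist_add hne a hε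
  obtain ⟨z₂, ρ₂, hρ₂, h₂, hb⟩ := exists_closedBall_subset_dist_sub_le_orientedDist_add hne b hε
  calc orientedDist A (l • a + m • b)
      ≤ dist (l • a + m • b) (l • z₁ + m • z₂) - (l * ρ₁ + m * ρ₂) :=
        orientedDist_le_dist_sub_of_closedBall_subset hc (by positivity)
          (hAconv.closedBall_combo_subset hρ₁ hρ₂ h₁ h₂ hl hm hlm) _
    _ ≤ l * (dist a z₁ - ρ₁) + m * (dist b z₂ - ρ₂) := by
        linarith [dist_combo_le a b z₁ z₂ hl hm]
    _ ≤ l * (orientedDist A a + ε) + m * (orientedDist A b + ε) := by gcongr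
    _ = l • orientedDist A a + m • orientedDist A b + ε := by
        rw [smul_eq_mul, smul_eq_mul]; linear_combination ε * hlm
end

section
/- Let X = ℝ, Y = ℝ², C = ℝ²₊, and f(x) = (x, −x eˣ). Then the set of efficient solutions of (X, f) equals [0, +∞), yet for every nonzero ξ ∈ C* = ℝ²₊ the function x ↦ ⟨ξ, f(x)⟩ is unbounded below on ℝ. -/
/-!
`x̄` is efficient iff no `x ≤ x̄` has `x eˣ ≥ x̄ e^x̄`. For `x̄ ≥ 0` this holds since `x eˣ < x̄ e^x̄`
whenever `x < x̄`; for `x̄ < 0` it fails since `x eˣ → 0 > x̄ e^x̄` as `x → -∞`.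
The scalarization `a x - b x eˣ` tends to `-∞` as `x → +∞` when `b > 0`, and as `x → -∞` when `b = 0`.
-/

open Filter Real Set Topology

lemma sub_range_inter_neg_eq_zero_iff {α E : Type*} [AddGroup E] {C : Set E} (hC : (0 : E) ∈ C)
    (f : α → E) (xbar : α) :
    {y | ∃ x, y = f x - f xbar} ∩ -C = {0} ↔ ∀ x, f x - f xbar ∈ -C → f x = f xbar := by
  constructor
  · intro h x hx
    have hmem : f x - f xbar ∈ ({0} : Set E) := h ▸ ⟨⟨x, rfl⟩, hx⟩
    exact sub_eq_zero.mp hmem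
  · intro h
    ext y
    constructor
    · rintro ⟨⟨x, rfl⟩, hx⟩
      exact sub_eq_zero.mpr (h x hx)
    · rintro rfl
      exact ⟨⟨xbar, (sub_self _).symm⟩, by simpa using hC⟩

lemma mul_exp_lt_mul_exp {x y : ℝ} (hy : 0 ≤ y) (hxy : x < y) : x * exp x < y * exp y := by
  rcases lt_or_ge x 0 with hx | hx
  · calc x * exp x < 0 := mul_neg_of_neg_of_pos hx (exp_pos x)
      _ ≤ y * exp y := mul_nonneg hy (exp_pos y).le
  · exact mul_lt_mul'' hxy (exp_lt_exp.2 hxy) hx (exp_pos x).le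

lemma tendsto_mul_exp_atBot_nhds_zero : Tendsto (fun x : ℝ => x * exp x) atBot (𝓝 0) := by
  have h := (tendsto_pow_mul_exp_neg_atTop_nhds_zero 1).comp tendsto_neg_atBot_atTop
  simpa [Function.comp_def] using h.neg

lemma exists_lt_mul_exp_lt_of_neg {y : ℝ} (hy : y < 0) : ∃ x < y, y * exp y < x * exp x := by
  have hlim : ∀ᶠ x in atBot, y * exp y < x * exp x :=
    tendsto_mul_exp_atBot_nhds_zero.eventually_const_lt (mul_neg_of_neg_of_pos hy (exp_pos y))
  exact ((eventually_lt_atBot y).and hlim).exists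

lemma tendsto_mul_add_mul_neg_mul_exp_atTop (a : ℝ) {b : ℝ} (hb : 0 < b) :
    Tendsto (fun x : ℝ => a * x + b * (-x * exp x)) atTop atBot := by
  have hfactor : Tendsto (fun x : ℝ => a - b * exp x) atTop atBot :=
    tendsto_atBot_add_const_left _ a
      (tendsto_neg_atTop_atBot.comp (tendsto_exp_atTop.const_mul_atTop hb))
  refine (tendsto_id.atTop_mul_atBot₀ hfactor).congr fun x => ?_
  simp only [id]
  ring

lemma not_bddBelow_range_mul_add_mul_neg_mul_exp {a b : ℝ} (ha : 0 ≤ a) (hb : 0 ≤ b)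
    (hab : (a, b) ≠ (0, 0)) :
    ¬ BddBelow (range fun x : ℝ => a * x + b * (-x * exp x)) := by
  rcases hb.lt_or_eq with hb | rfl
  · exact not_bddBelow_of_tendsto_atBot (tendsto_mul_add_mul_neg_mul_exp_atTop a hb)
  · have ha : 0 < a := ha.lt_of_ne fun h => hab (by rw [← h])
    simpa using not_bddBelow_of_tendsto_atBot (tendsto_id.const_mul_atBot ha)

/-- For `f x = (x, -x eˣ)` and `C = ℝ²₊`, the set of efficient solutions is
`[0, ∞)`, yet every nonzero `ξ ∈ C*` gives a scalarization unbounded below. -/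
theorem example_efficient_but_unbounded :
    (let f : ℝ → ℝ × ℝ := fun x => (x, -x * Real.exp x)
     let C : Set (ℝ × ℝ) := {p | 0 ≤ p.1 ∧ 0 ≤ p.2}
     {xbar : ℝ | {y | ∃ x, y = f x - f xbar} ∩ (-C) = {0}} = Set.Ici (0 : ℝ)) ∧
    (∀ a b : ℝ, 0 ≤ a → 0 ≤ b → (a, b) ≠ ((0 : ℝ), (0 : ℝ)) →
      ¬ BddBelow (Set.range fun x : ℝ => a * x + b * (-x * Real.exp x))) := by
  refine ⟨?_, fun a b ha hb hab => not_bddBelow_range_mul_add_mul_neg_mul_exp ha hb hab⟩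
  ext xbar
  rw [mem_Ici, mem_ofPred, sub_range_inter_neg_eq_zero_iff (C := {p : ℝ × ℝ | 0 ≤ p.1 ∧ 0 ≤ p.2})
    ⟨le_rfl, le_rfl⟩]
  have hdominated : ∀ x, (x, -x * exp x) - (xbar, -xbar * exp xbar) ∈
      -{p : ℝ × ℝ | 0 ≤ p.1 ∧ 0 ≤ p.2} ↔ x ≤ xbar ∧ xbar * exp xbar ≤ x * exp x := fun x => by
    simp only [Set.mem_neg, mem_ofPred_eq, Prod.fst_neg, Prod.snd_neg, Prod.fst_sub, Prod.snd_sub]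
    constructor <;> rintro ⟨h₁, h₂⟩ <;> constructor <;> linarith
  simp only [hdominated, Prod.mk.injEq]
  constructor
  · intro h
    by_contra! hneg
    obtain ⟨x, hlt, hgt⟩ := exists_lt_mul_exp_lt_of_neg hneg
    exact hlt.ne (h x ⟨hlt.le, hgt.le⟩).1
  · rintro hxbar x ⟨hle, hge⟩
    obtain rfl : x = xbar := hle.eq_of_not_lt fun hlt => (mul_exp_lt_mul_exp hxbar hlt).not_ge hge
    exact ⟨rfl, rfl⟩
end

section
/- The function f : ℝ → ℝ² given by f(x) = (x, −x eˣ) is not *-quasiconvex with respect to the cone ℝ²₊: there exists ξ ∈ ℝ²₊ such that x ↦ ⟨ξ, f(x)⟩ is not quasiconvex. -/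
/-!
Taking `ξ = (0, 1)` reduces the claim to `g x = -x eˣ` not being quasiconvex. Quasiconvexity
bounds `g` on a segment by its larger endpoint value, but `g` rises from `g (-2) = 2e⁻²` to
`g (-1) = e⁻¹` (because `e > 2`) and falls back to `g 0 = 0`.
-/

open Set Real

theorem QuasiconvexOn.le_max_of_mem_segment {𝕜 E β : Type*} [Semiring 𝕜] [PartialOrder 𝕜]
    [AddCommMonoid E] [LinearOrder β] [SMul 𝕜 E] {s : Set E} {f : E → β} {x y z : E}
    (hf : QuasiconvexOn 𝕜 s f) (hx : x ∈ s) (hy : y ∈ s) (hz : z ∈ segment 𝕜 x y) :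
    f z ≤ max (f x) (f y) :=
  ((hf _).segment_subset ⟨hx, le_max_left _ _⟩ ⟨hy, le_max_right _ _⟩ hz).2

theorem not_quasiconvexOn_of_lt_of_lt {𝕜 β : Type*} [Field 𝕜] [LinearOrder 𝕜]
    [IsStrictOrderedRing 𝕜] [LinearOrder β] {s : Set 𝕜} {f : 𝕜 → β} {x y z : 𝕜}
    (hx : x ∈ s) (hy : y ∈ s) (hxz : x ≤ z) (hzy : z ≤ y) (hfx : f x < f z) (hfy : f y < f z) :
    ¬ QuasiconvexOn 𝕜 s f := fun hf =>
  (max_lt hfx hfy).not_ge <|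
    hf.le_max_of_mem_segment hx hy (by rw [segment_eq_Icc (hxz.trans hzy)]; exact ⟨hxz, hzy⟩)

theorem two_mul_exp_neg_two_lt_exp_neg_one : 2 * exp (-2) < exp (-1) := by
  have h : exp (-1) = exp (-2) * exp 1 := by rw [← exp_add]; norm_num
  rw [h]
  nlinarith [exp_pos (-2), exp_one_gt_two]

/-- `f x = (x, -x eˣ)` is not `*`-quasiconvex w.r.t. `ℝ²₊`: some
`ξ = (a, b) ∈ ℝ²₊` makes `x ↦ ⟨ξ, f x⟩` not quasiconvex. -/
theorem example_not_star_quasiconvex :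
    ∃ a b : ℝ, 0 ≤ a ∧ 0 ≤ b ∧
      ¬ QuasiconvexOn ℝ Set.univ (fun x : ℝ => a * x + b * (-x * Real.exp x)) := by
  refine ⟨0, 1, le_rfl, zero_le_one, ?_⟩
  simp only [zero_mul, zero_add, one_mul]
  refine not_quasiconvexOn_of_lt_of_lt (x := -2) (z := -1) (y := 0) (mem_univ _) (mem_univ _)
    (by norm_num) (by norm_num) (by simpa using two_mul_exp_neg_two_lt_exp_neg_one) ?_
  simp only [neg_zero, zero_mul]
  positivity
end
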